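/- Let r be a nonzero integer and s ∈ ℂ with Re(s) > 1. Then ∑_{c=1}^∞ C_c(r) / c^s = σ_{1−s}(r) / ζ(s), where the series on the left converges absolutely. -/

import Mathlib

open Complex Filter Topology

noncomputable section

/-- The Ramanujan sum `C_c(r) = ∑_{1 ≤ a ≤ c, gcd(a,c)=1} e^{2πiar/c}`. -/
def ramanujanSum (c : ℕ) (r : ℤ) : ℂ :=
  ∑ a ∈ Finset.filter (fun a => Nat.Coprime a c) (Finset.Icc 1 c),
    Complex.exp (2 * Real.pi * Complex.I * (a : ℂ) * (r : ℂ) / (c : ℂ))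

/-- The divisor function `σ_w(r) = ∑_{d ∣ |r|, d > 0} d^w` for a nonzero integer `r`. -/
def sigmaDiv (w : ℂ) (r : ℤ) : ℂ :=
  ∑ d ∈ Nat.divisors r.natAbs, (d : ℂ) ^ w
/-!
Detecting `gcd(a, c) = 1` by `∑_{d ∣ gcd(a, c)} μ(d)` and evaluating the resulting sums of
`(c/d)`-th roots of unity gives the classical formula `C_c(r) = ∑_{d ∣ c} μ(d) · (c/d) · [c/d ∣ r]`:
`c ↦ C_c(r)` is the Dirichlet convolution of `e ↦ e · [e ∣ r]` with `μ`. For `r ≠ 0` the first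
factor is finitely supported with L-series `σ_{1-s}(r)`, the L-series of `μ` is `1/ζ(s)` for
`Re s > 1`, and absolutely convergent L-series multiply under convolution.
-/

open ArithmeticFunction LSeries
open scoped LSeries.notation ArithmeticFunction.Moebius

theorem Finset.sum_Icc_pow_of_pow_eq_one {K : Type*} [Field K] [DecidableEq K] {z : K} {c : ℕ}
    (hz : z ^ c = 1) : ∑ a ∈ Icc 1 c, z ^ a = if z = 1 then (c : K) else 0 := by
  split_ifs with h1
  · simp [h1]
  rw [← Ico_add_one_right_eq_Icc, sum_Ico_eq_sum_range, Nat.add_sub_cancel]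
  simp only [pow_add, pow_one, ← mul_sum, geom_sum_eq h1, hz, sub_self, zero_div, mul_zero]

theorem sum_Icc_exp_two_pi_I_eq (c : ℕ) (hc : c ≠ 0) (k : ℤ) :
    ∑ a ∈ Finset.Icc 1 c, exp (2 * Real.pi * I * (a : ℂ) * (k : ℂ) / (c : ℂ))
      = if (c : ℤ) ∣ k then (c : ℂ) else 0 := by
  set ζ := exp (2 * Real.pi * I / c) with hζ_def
  have hζ : IsPrimitiveRoot ζ c := isPrimitiveRoot_exp c hc
  have hterm (a : ℕ) : exp (2 * Real.pi * I * (a : ℂ) * (k : ℂ) / (c : ℂ)) = (ζ ^ k) ^ a := by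
    rw [hζ_def, ← exp_int_mul, ← exp_nat_mul]
    ring_nf
  simp_rw [hterm, ← hζ.zpow_eq_one_iff_dvd]
  refine Finset.sum_Icc_pow_of_pow_eq_one ?_
  rw [← zpow_natCast, ← zpow_mul, mul_comm, zpow_mul, zpow_natCast, hζ.pow_eq_one, one_zpow]

theorem Nat.filter_Icc_dvd_eq_map {d : ℕ} (hd : 0 < d) (c : ℕ) :
    {a ∈ Finset.Icc 1 c | d ∣ a}
      = (Finset.Icc 1 (c / d)).map ⟨(d * ·), mul_right_injective₀ hd.ne'⟩ := by
  ext a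
  simp only [Finset.mem_filter, Finset.mem_Icc, Finset.mem_map, Function.Embedding.coeFn_mk,
    Nat.le_div_iff_mul_le hd]
  constructor
  · rintro ⟨⟨h1, h2⟩, b, rfl⟩
    exact ⟨b, ⟨Nat.pos_of_mul_pos_left h1, by linarith⟩, rfl⟩
  · rintro ⟨b, ⟨hb1, hb2⟩, rfl⟩
    exact ⟨⟨Nat.mul_pos hd hb1, by linarith⟩, dvd_mul_right d b⟩

theorem ArithmeticFunction.sum_divisors_moebius (n : ℕ) :
    ∑ d ∈ n.divisors, μ d = if n = 1 then 1 else 0 := by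
  rw [← coe_mul_zeta_apply, moebius_mul_coe_zeta, one_apply]

theorem ArithmeticFunction.sum_divisors_filter_dvd_moebius {c : ℕ} (hc : c ≠ 0) (a : ℕ) :
    ∑ d ∈ c.divisors with d ∣ a, μ d = if a.Coprime c then 1 else 0 := by
  have hgcd : {d ∈ c.divisors | d ∣ a} = (a.gcd c).divisors := by
    rw [← Nat.divisors_filter_dvd_of_dvd hc (Nat.gcd_dvd_right a c)]
    exact Finset.filter_congr fun d hd => by simp [Nat.dvd_gcd_iff, Nat.dvd_of_mem_divisors hd]
  simp only [hgcd, sum_divisors_moebius, Nat.coprime_iff_gcd_eq_one]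

def idOnDivisors (r : ℤ) (e : ℕ) : ℂ := if (e : ℤ) ∣ r then e else 0

theorem sum_Icc_filter_dvd_exp_two_pi_I_eq {c d : ℕ} (hc : c ≠ 0) (hd : d ∣ c) (k : ℤ) :
    ∑ a ∈ Finset.Icc 1 c with d ∣ a, exp (2 * Real.pi * I * (a : ℂ) * (k : ℂ) / (c : ℂ))
      = idOnDivisors k (c / d) := by
  have hd0 : 0 < d := Nat.pos_of_dvd_of_pos hd (Nat.pos_of_ne_zero hc)
  have hd0' : (d : ℂ) ≠ 0 := by exact_mod_cast hd0.ne'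
  have hcd : (c : ℂ) = d * (c / d : ℕ) := by rw [← Nat.cast_mul, Nat.mul_div_cancel' hd]
  rw [Nat.filter_Icc_dvd_eq_map hd0, Finset.sum_map, idOnDivisors,
    ← sum_Icc_exp_two_pi_I_eq (c / d) ((Nat.div_ne_zero_iff_of_dvd hd).mpr ⟨hc, hd0.ne'⟩) k]
  refine Finset.sum_congr rfl fun b _ => congrArg exp ?_
  rw [Function.Embedding.coeFn_mk, hcd, Nat.cast_mul]
  field_simp

theorem ramanujanSum_eq_sum_divisors (r : ℤ) {c : ℕ} (hc : c ≠ 0) :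
    ramanujanSum c r = ∑ d ∈ c.divisors, (μ d : ℂ) * idOnDivisors r (c / d) := by
  have hcoprime (a : ℕ) :
      (if a.Coprime c then (1 : ℂ) else 0) = ∑ d ∈ c.divisors with d ∣ a, (μ d : ℂ) := by
    exact_mod_cast (sum_divisors_filter_dvd_moebius hc a).symm
  calc ramanujanSum c r
      = ∑ a ∈ Finset.Icc 1 c, ∑ d ∈ c.divisors,
          if d ∣ a then (μ d : ℂ) * exp (2 * Real.pi * I * (a : ℂ) * (r : ℂ) / (c : ℂ)) else 0 := by
        rw [ramanujanSum, Finset.sum_filter]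
        refine Finset.sum_congr rfl fun a _ => ?_
        rw [← Finset.sum_filter, ← Finset.sum_mul, ← hcoprime, ite_mul, one_mul, zero_mul]
    _ = ∑ d ∈ c.divisors, (μ d : ℂ) * idOnDivisors r (c / d) := by
        rw [Finset.sum_comm]
        refine Finset.sum_congr rfl fun d hd => ?_
        rw [← Finset.sum_filter, ← Finset.mul_sum,
          sum_Icc_filter_dvd_exp_two_pi_I_eq hc (Nat.dvd_of_mem_divisors hd)]

theorem ramanujanSum_eq_convolution (r : ℤ) {c : ℕ} (hc : c ≠ 0) :
    ramanujanSum c r = (idOnDivisors r ⍟ ↗μ) c := by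
  simp only [ramanujanSum_eq_sum_divisors r hc, convolution_def,
    Nat.sum_divisorsAntidiagonal' fun x y => idOnDivisors r x * (μ y : ℂ), mul_comm]

theorem LSeriesHasSum_idOnDivisors {r : ℤ} (hr : r ≠ 0) (s : ℂ) :
    LSeriesHasSum (idOnDivisors r) s (sigmaDiv (1 - s) r) := by
  have hr' : r.natAbs ≠ 0 := Int.natAbs_ne_zero.mpr hr
  have hterm (n : ℕ) : term (idOnDivisors r) s n
      = if n ∈ r.natAbs.divisors then (n : ℂ) ^ (1 - s) else 0 := by
    rcases eq_or_ne n 0 with rfl | hn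
    · simp
    simp only [term_of_ne_zero hn, idOnDivisors, Int.natCast_dvd, Nat.mem_divisors, hr', ne_eq,
      not_false_eq_true, and_true]
    rw [ite_div, zero_div, cpow_sub _ _ (Nat.cast_ne_zero.mpr hn), cpow_one]
  have h : HasSum (term (idOnDivisors r) s)
      (∑ n ∈ r.natAbs.divisors, term (idOnDivisors r) s n) :=
    hasSum_sum_of_ne_finset_zero fun n hn => (hterm n).trans (if_neg hn)
  rwa [Finset.sum_congr rfl fun n hn => (hterm n).trans (if_pos hn)] at h

theorem LSeriesHasSum_moebius {s : ℂ} (hs : 1 < s.re) :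
    LSeriesHasSum ↗μ s (riemannZeta s)⁻¹ := by
  have h := LSeries_zeta_mul_Lseries_moebius hs
  rw [LSeries_zeta_eq_riemannZeta hs] at h
  rw [← eq_inv_of_mul_eq_one_right h]
  exact (LSeriesSummable_moebius_iff.mpr hs).LSeriesHasSum

theorem LSeriesHasSum.hasSum_pnat {f : ℕ → ℂ} {s a : ℂ} (h : LSeriesHasSum f s a) :
    HasSum (fun n : ℕ+ => f n / ((n : ℕ) : ℂ) ^ s) a := by
  have := (hasSum_pnat_iff (f := term f s) (a := a)).mpr (by rwa [term_zero, add_zero])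
  simpa only [term_of_ne_zero (PNat.ne_zero _)] using this

/-- Dirichlet series of the Ramanujan sums: for `Re(s) > 1`,
`∑_{c≥1} C_c(r)/c^s = σ_{1−s}(r)/ζ(s)`, the series converging absolutely. -/
theorem ramanujan_dirichlet_series (r : ℤ) (hr : r ≠ 0) (s : ℂ) (hs : 1 < s.re) :
    Summable (fun c : ℕ+ => ‖ramanujanSum (c : ℕ) r / ((c : ℕ) : ℂ) ^ s‖) ∧
    ∑' c : ℕ+, ramanujanSum (c : ℕ) r / ((c : ℕ) : ℂ) ^ s = sigmaDiv (1 - s) r / riemannZeta s := by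
  have hL := (LSeriesHasSum_idOnDivisors hr s).convolution (LSeriesHasSum_moebius hs)
  rw [← div_eq_mul_inv, ← LSeriesHasSum_congr _ _ fun hc => ramanujanSum_eq_convolution r hc] at hL
  have h := hL.hasSum_pnat
  -- absolute convergence comes for free: summability in `ℂ` is unconditional
  exact ⟨summable_norm_iff.mpr h.summable, h.tsum_eq⟩
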